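/- arXiv:1901.00606 — 3 statements merged into one kernel-verified Lean document; each statement's English description precedes it below -/
import Mathlib

section
/- Under the same hypotheses, x(t) = A·sinh(F(ωt+φ)) satisfies x''(t) - 3ω²·x(t) - 4(ω/A)²·x(t)³ = 0. -/
theorem stmt_9 (c F : ℝ → ℝ) (A ω φ r : ℝ) (hA : A ≠ 0) (hr : 0 < r)
    (hd : DifferentiableOn ℝ c (Set.Ioo (-r) r))
    (hfirst : ∀ u ∈ Set.Ioo (-r) r, (deriv c u) ^ 2 = c u ^ 4 - 1)
    (hge : ∀ u ∈ Set.Ioo (-r) r, 1 ≤ c u)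
    (hF : ∀ t ∈ Set.Ioo (-r) r, F t = ∫ u in (0 : ℝ)..t, c u)
    (hcosh : ∀ u ∈ Set.Ioo (-r) r, Real.cosh (2 * F u) = c u ^ 2) :
    ∀ t, ω * t + φ ∈ Set.Ioo (-r) r →
      deriv (deriv (fun t => A * Real.sinh (F (ω * t + φ)))) t
        - 3 * ω ^ 2 * (A * Real.sinh (F (ω * t + φ)))
        - 4 * (ω / A) ^ 2 * (A * Real.sinh (F (ω * t + φ))) ^ 3 = 0 := by
  have hIoo : IsOpen (Set.Ioo (-r) r) := isOpen_Ioo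
  have hc := hd.continuousOn
  have hF' : ∀ u ∈ Set.Ioo (-r) r, HasDerivAt F (c u) u := by
    intro u hu
    have h0 : (0:ℝ) ∈ Set.Ioo (-r) r := ⟨by linarith, hr⟩
    have hsub : Set.uIcc 0 u ⊆ Set.Ioo (-r) r := Set.ordConnected_Ioo.uIcc_subset h0 hu
    have h : HasDerivAt (fun t => ∫ u in (0:ℝ)..t, c u) (c u) u :=
      intervalIntegral.integral_hasDerivAt_right ((hc.mono hsub).intervalIntegrable)
        (hc.stronglyMeasurableAtFilter hIoo u hu) (hc.continuousAt (hIoo.mem_nhds hu))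
    exact h.congr_of_eventuallyEq (by filter_upwards [hIoo.mem_nhds hu] with v hv using hF v hv)
  have hcne : ∀ u ∈ Set.Ioo (-r) r, c u ≠ 0 := fun u hu => by have := hge u hu; linarith
  have hc' : ∀ u ∈ Set.Ioo (-r) r, deriv c u = 2 * Real.sinh (F u) * Real.cosh (F u) := by
    intro u hu
    have h1 : HasDerivAt (fun u => Real.cosh (2 * F u)) (Real.sinh (2 * F u) * (2 * c u)) u :=
      ((hF' u hu).const_mul 2).cosh
    have h2 : HasDerivAt (fun u => c u ^ 2) ((2 : ℕ) * c u ^ 1 * deriv c u) u :=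
      ((hd.differentiableAt (hIoo.mem_nhds hu)).hasDerivAt).pow 2
    have heq : (fun u => c u ^ 2) =ᶠ[nhds u] fun u => Real.cosh (2 * F u) := by
      filter_upwards [hIoo.mem_nhds hu] with v hv using (hcosh v hv).symm
    have huniq := h2.unique (h1.congr_of_eventuallyEq heq)
    have h3 : Real.sinh (2 * F u) = 2 * Real.sinh (F u) * Real.cosh (F u) :=
      Real.sinh_two_mul _
    have hcu := hcne u hu
    rw [h3] at huniq
    have h5 : deriv c u * (2 * c u) = (2 * Real.sinh (F u) * Real.cosh (F u)) * (2 * c u) := by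
      ring_nf
      ring_nf at huniq
      linarith [huniq]
    exact mul_right_cancel₀ (by simpa using hcu) h5
  intro t ht
  have hs : ∀ t : ℝ, HasDerivAt (fun t : ℝ => ω * t + φ) ω t := fun t => by
    simpa using ((hasDerivAt_id t).const_mul ω).add_const φ
  have hmem : ∀ᶠ t' in nhds t, ω * t' + φ ∈ Set.Ioo (-r) r :=
    (hs t).continuousAt.preimage_mem_nhds (hIoo.mem_nhds ht)
  have hx1 : ∀ t : ℝ, ω * t + φ ∈ Set.Ioo (-r) r → HasDerivAt (fun t => A * Real.sinh (F (ω * t + φ)))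
      (A * (Real.cosh (F (ω * t + φ)) * (c (ω * t + φ) * ω))) t := fun t h' =>
    ((((hF' _ h').comp t (hs t)).sinh).const_mul A)
  have h1 : HasDerivAt (fun t => Real.cosh (F (ω * t + φ)))
      (Real.sinh (F (ω * t + φ)) * (c (ω * t + φ) * ω)) t :=
    ((hF' _ ht).comp t (hs t)).cosh
  have h2 : HasDerivAt (fun t => c (ω * t + φ) * ω)
      (deriv c (ω * t + φ) * ω * ω) t :=
    ((((hd.differentiableAt (hIoo.mem_nhds ht)).hasDerivAt).comp t (hs t)).mul_const ω)
  have hx2 : HasDerivAt (fun t => A * (Real.cosh (F (ω * t + φ)) * (c (ω * t + φ) * ω)))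
      (A * (Real.sinh (F (ω * t + φ)) * (c (ω * t + φ) * ω) * (c (ω * t + φ) * ω)
        + Real.cosh (F (ω * t + φ)) * (deriv c (ω * t + φ) * ω * ω))) t :=
    (h1.mul h2).const_mul A
  have hd1 : deriv (fun t => A * Real.sinh (F (ω * t + φ)))
      =ᶠ[nhds t] fun t => A * (Real.cosh (F (ω * t + φ)) * (c (ω * t + φ) * ω)) := by
    filter_upwards [hmem] with t' h' using (hx1 t' h').deriv
  rw [hd1.deriv_eq, hx2.deriv, hc' _ ht]
  have e1 : c (ω * t + φ) ^ 2 = 1 + 2 * Real.sinh (F (ω * t + φ)) ^ 2 := by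
    have := hcosh (ω * t + φ) ht
    rw [Real.cosh_two_mul] at this
    have h4 := Real.cosh_sq (F (ω * t + φ))
    nlinarith [this, h4]
  have e2 : Real.cosh (F (ω * t + φ)) ^ 2 = Real.sinh (F (ω * t + φ)) ^ 2 + 1 :=
    Real.cosh_sq_sub_sinh_sq (F (ω * t + φ)) ▸ by nlinarith [Real.cosh_sq_sub_sinh_sq (F (ω * t + φ))]
  field_simp
  linear_combination (A * ω ^ 2 * Real.sinh (F (ω * t + φ))) * e1
    + (2 * A * ω ^ 2 * Real.sinh (F (ω * t + φ))) * e2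
end

section
/- Let s : ℝ → ℝ satisfy (s'(u))² = 1 - s(u)⁴ and s''(u) = -2 s(u)³. Fix A ≠ 0, B ≠ 0, ω ≠ 0, φ ∈ ℝ and define x(t) = A·e^{ωt}·s(B·e^{ωt} + φ). Then x''(t) - 3ω·x'(t) + 2ω²·x(t) + 2(Bω/A)²·x(t)³ = 0 for all t. -/
theorem stmt_16 (s : ℝ → ℝ) (A B ω φ : ℝ) (hA : A ≠ 0) (hB : B ≠ 0) (hω : ω ≠ 0)
    (hd : Differentiable ℝ s) (hd2 : Differentiable ℝ (deriv s))
    (hfirst : ∀ u, (deriv s u) ^ 2 = 1 - s u ^ 4)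
    (hsecond : ∀ u, deriv (deriv s) u = -2 * s u ^ 3) :
    ∀ t, deriv (deriv (fun t => A * Real.exp (ω * t) * s (B * Real.exp (ω * t) + φ))) t
        - 3 * ω * deriv (fun t => A * Real.exp (ω * t) * s (B * Real.exp (ω * t) + φ)) t
        + 2 * ω ^ 2 * (A * Real.exp (ω * t) * s (B * Real.exp (ω * t) + φ))
        + 2 * (B * ω / A) ^ 2 * (A * Real.exp (ω * t) * s (B * Real.exp (ω * t) + φ)) ^ 3
        = 0 := by
  have hE : ∀ t : ℝ, HasDerivAt (fun t => Real.exp (ω * t)) (ω * Real.exp (ω * t)) t := by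
    intro t
    simpa [mul_comm] using ((hasDerivAt_id t).const_mul ω).exp
  have hu : ∀ t : ℝ, HasDerivAt (fun t => B * Real.exp (ω * t) + φ)
      (B * (ω * Real.exp (ω * t))) t := fun t => ((hE t).const_mul B).add_const φ
  have hs : ∀ t : ℝ, HasDerivAt (fun t => s (B * Real.exp (ω * t) + φ))
      (deriv s (B * Real.exp (ω * t) + φ) * (B * (ω * Real.exp (ω * t)))) t :=
    fun t => (hd _).hasDerivAt.comp t (hu t)
  have hx : ∀ t : ℝ, HasDerivAt (fun t => A * Real.exp (ω * t) * s (B * Real.exp (ω * t) + φ))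
      (A * (ω * Real.exp (ω * t)) * s (B * Real.exp (ω * t) + φ)
        + A * Real.exp (ω * t) * (deriv s (B * Real.exp (ω * t) + φ) * (B * (ω * Real.exp (ω * t))))) t :=
    fun t => ((hE t).const_mul A).mul (hs t)
  have hderiv1 : deriv (fun t => A * Real.exp (ω * t) * s (B * Real.exp (ω * t) + φ))
      = fun t => A * (ω * Real.exp (ω * t)) * s (B * Real.exp (ω * t) + φ)
        + A * Real.exp (ω * t) * (deriv s (B * Real.exp (ω * t) + φ) * (B * (ω * Real.exp (ω * t)))) :=
    funext fun t => (hx t).deriv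
  have hs' : ∀ t : ℝ, HasDerivAt (fun t => deriv s (B * Real.exp (ω * t) + φ))
      (deriv (deriv s) (B * Real.exp (ω * t) + φ) * (B * (ω * Real.exp (ω * t)))) t :=
    fun t => (hd2 _).hasDerivAt.comp t (hu t)
  intro t
  have hx2 : HasDerivAt (deriv (fun t => A * Real.exp (ω * t) * s (B * Real.exp (ω * t) + φ)))
      (A * (ω * (ω * Real.exp (ω * t))) * s (B * Real.exp (ω * t) + φ)
        + A * (ω * Real.exp (ω * t)) * (deriv s (B * Real.exp (ω * t) + φ) * (B * (ω * Real.exp (ω * t))))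
        + (A * (ω * Real.exp (ω * t)) * (deriv s (B * Real.exp (ω * t) + φ) * (B * (ω * Real.exp (ω * t))))
          + A * Real.exp (ω * t) *
            (deriv (deriv s) (B * Real.exp (ω * t) + φ) * (B * (ω * Real.exp (ω * t))) * (B * (ω * Real.exp (ω * t)))
              + deriv s (B * Real.exp (ω * t) + φ) * (B * (ω * (ω * Real.exp (ω * t))))))) t := by
    rw [hderiv1]
    exact ((((hE t).const_mul ω).const_mul A).mul (hs t)).add
      (((hE t).const_mul A).mul ((hs' t).mul ((hE t).const_mul ω |>.const_mul B)))
  rw [hx2.deriv, hderiv1, hsecond]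
  field_simp
  ring
end

section
/- Let c : ℝ → ℝ satisfy (c'(u))² = 1 - c(u)⁴ and c''(u) = -2 c(u)³. Fix A ≠ 0, B ≠ 0, ω ≠ 0, φ ∈ ℝ and define x(t) = A·e^{ωt}·c(B·e^{ωt} + φ). Then x''(t) - 3ω·x'(t) + 2ω²·x(t) + 2(Bω/A)²·x(t)³ = 0 for all t. -/
/-!
Write `e = exp (ω t)` and `u = B e + φ`, so that `e' = ω e` and `u' = B ω e`. Differentiating
`A eᵏ g(u)` only raises `k` or differentiates `g`, so with `y = A B e² c'(u)` one gets
`(D - ω) x = ω y` and `(D - 2ω) y = A B² ω e³ c''(u)`. Since `D² - 3ωD + 2ω² = (D - 2ω)(D - ω)`,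
this gives `x'' - 3ωx' + 2ω²x = A (B ω)² e³ c''(u)` for any twice differentiable `c`, and with
`c'' = -2 c³` the right-hand side is `-2 A (B ω)² e³ c(u)³ = -2 (B ω / A)² x³`.
-/

open Real

variable {f : ℝ → ℝ} {f' : ℝ} {A B ω φ t : ℝ}

theorem hasDerivAt_mul_exp_pow_mul_comp (k : ℕ) (hf : HasDerivAt f f' (B * exp (ω * t) + φ)) :
    HasDerivAt (fun t => A * exp (ω * t) ^ k * f (B * exp (ω * t) + φ))
      (k * ω * (A * exp (ω * t) ^ k * f (B * exp (ω * t) + φ))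
        + ω * (A * B * exp (ω * t) ^ (k + 1) * f')) t := by
  have hexp : HasDerivAt (fun t => exp (ω * t)) (ω * exp (ω * t)) t := by
    simpa [mul_comm] using ((hasDerivAt_id t).const_mul ω).exp
  have hu : HasDerivAt (fun t => B * exp (ω * t) + φ) (B * (ω * exp (ω * t))) t :=
    (hexp.const_mul B).add_const φ
  refine (((hexp.pow k).const_mul A).mul (hf.comp t hu)).congr_deriv ?_
  rcases k with _ | k
  · simp only [Function.comp_apply, Pi.pow_apply, pow_zero, CharP.cast_eq_zero]
    ring
  · simp only [Function.comp_apply, Pi.pow_apply, Nat.cast_add, Nat.cast_one, Nat.add_sub_cancel]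
    ring

theorem deriv_mul_exp_mul_comp (hc : Differentiable ℝ f) :
    deriv (fun t => A * exp (ω * t) * f (B * exp (ω * t) + φ))
      = fun t => ω * (A * exp (ω * t) * f (B * exp (ω * t) + φ))
          + ω * (A * B * exp (ω * t) ^ 2 * deriv f (B * exp (ω * t) + φ)) := by
  funext t
  simpa using (hasDerivAt_mul_exp_pow_mul_comp (A := A) 1 (hc _).hasDerivAt).deriv

theorem deriv_deriv_mul_exp_mul_comp (hc : Differentiable ℝ f) (hc' : Differentiable ℝ (deriv f)) :
    deriv (deriv (fun t => A * exp (ω * t) * f (B * exp (ω * t) + φ))) t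
      - 3 * ω * deriv (fun t => A * exp (ω * t) * f (B * exp (ω * t) + φ)) t
      + 2 * ω ^ 2 * (A * exp (ω * t) * f (B * exp (ω * t) + φ))
      = A * (B * ω) ^ 2 * exp (ω * t) ^ 3 * deriv (deriv f) (B * exp (ω * t) + φ) := by
  have hx := hasDerivAt_mul_exp_pow_mul_comp (A := A) 1 (hc (B * exp (ω * t) + φ)).hasDerivAt
  have hy := hasDerivAt_mul_exp_pow_mul_comp (A := A * B) 2 (hc' (B * exp (ω * t) + φ)).hasDerivAt
  simp only [pow_one] at hx
  rw [hx.deriv, deriv_mul_exp_mul_comp hc, ((hx.const_mul ω).fun_add (hy.const_mul ω)).deriv]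
  push_cast
  ring

theorem stmt_17_general (c : ℝ → ℝ) (A B ω φ : ℝ)
    (hd : Differentiable ℝ c) (hd2 : Differentiable ℝ (deriv c))
    (hsecond : ∀ u, deriv (deriv c) u = -2 * c u ^ 3) :
    ∀ t, deriv (deriv (fun t => A * Real.exp (ω * t) * c (B * Real.exp (ω * t) + φ))) t
        - 3 * ω * deriv (fun t => A * Real.exp (ω * t) * c (B * Real.exp (ω * t) + φ)) t
        + 2 * ω ^ 2 * (A * Real.exp (ω * t) * c (B * Real.exp (ω * t) + φ))
        + 2 * (B * ω / A) ^ 2 * (A * Real.exp (ω * t) * c (B * Real.exp (ω * t) + φ)) ^ 3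
        = 0 := by
  intro t
  rw [deriv_deriv_mul_exp_mul_comp hd hd2, hsecond]
  field_simp
  ring

theorem stmt_17 (c : ℝ → ℝ) (A B ω φ : ℝ) (hA : A ≠ 0) (hB : B ≠ 0) (hω : ω ≠ 0)
    (hd : Differentiable ℝ c) (hd2 : Differentiable ℝ (deriv c))
    (hfirst : ∀ u, (deriv c u) ^ 2 = 1 - c u ^ 4)
    (hsecond : ∀ u, deriv (deriv c) u = -2 * c u ^ 3) :
    ∀ t, deriv (deriv (fun t => A * Real.exp (ω * t) * c (B * Real.exp (ω * t) + φ))) t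
        - 3 * ω * deriv (fun t => A * Real.exp (ω * t) * c (B * Real.exp (ω * t) + φ)) t
        + 2 * ω ^ 2 * (A * Real.exp (ω * t) * c (B * Real.exp (ω * t) + φ))
        + 2 * (B * ω / A) ^ 2 * (A * Real.exp (ω * t) * c (B * Real.exp (ω * t) + φ)) ^ 3
        = 0 :=
  stmt_17_general c A B ω φ hd hd2 hsecond
end
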